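/- Let μ ∈ ℝ^n satisfy 0 ≤ μ_1 ≤ μ_2 ≤ ⋯ ≤ μ_n and ∑_{i=1}^n μ_i = 1. Let Z be an integrable real random variable with finite essential supremum, let Z_1,…,Z_{n−1} be iid with the same law as Z, set Z_n := esssup Z, and let Z_(1) ≤ ⋯ ≤ Z_(n) be the order statistics of Z_1,…,Z_n. Let U_1,…,U_{n−1} be iid uniform on [0,1] with order statistics U_(1) ≤ ⋯ ≤ U_(n−1), and set U_(n) := 1. Then P[ ∑_{i=1}^n μ_i Z_(i) ≥ E[Z] ] ≥ P[ ∑_{i=1}^k μ_i ≤ U_(k) for all k ∈ {1,…,n} ]. -/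

import Mathlib

open MeasureTheory ProbabilityTheory

/-- Increasing rearrangement (order statistics) of a finite tuple. -/
noncomputable def sortedVec {α : Type*} [LinearOrder α] {n : ℕ} (z : Fin n → α) : Fin n → α :=
  z ∘ Tuple.sort z

/-- The full sample vector `(Z_1, …, Z_{n-1}, M)`. -/
def fullVec {Ω : Type*} {n : ℕ} (Zs : Fin (n - 1) → Ω → ℝ) (M : ℝ) (i : Fin n) (ω : Ω) : ℝ :=
  if h : (i : ℕ) < n - 1 then Zs ⟨(i : ℕ), h⟩ ω else M

/-- The augmented uniform order statistics `U_(k)`, `k ∈ [n]`, with the convention `U_(n) := 1`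
(the index `k : Fin n` is `0`-based: `augOrder U k = U_(k+1)`). -/
noncomputable def augOrder {n : ℕ} (U : Fin (n - 1) → ℝ) (k : Fin n) : ℝ :=
  if h : (k : ℕ) + 1 < n then sortedVec U ⟨(k : ℕ), by omega⟩ else 1

/-! Quantile coupling. If `q` is the quantile function of the law of `Z`, the vector
`(q U_1, …, q U_{n-1})` has the law of `(Z_1, …, Z_{n-1})`, so it suffices to prove the inclusion
of events with `Z_i = q U_i`. As `q` is nondecreasing on `(0, 1)` and bounded by `esssup Z`, the
order statistics of `(q U_1, …, q U_{n-1}, esssup Z)` are `q U_(1), …, q U_(n-1), esssup Z`.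
Cut `(0, 1]` at the partial sums `s_k = μ_1 + ⋯ + μ_k`: when `s_k ≤ U_(k)`, monotonicity gives
`∫_{s_{k-1}}^{s_k} q ≤ μ_k q U_(k)`, and summing over `k` yields `E[Z] = ∫_0^1 q ≤ ∑ μ_k Z_(k)`. -/

open Set Filter

section SortedVec

variable {α β : Type*} [LinearOrder α] [LinearOrder β] {n : ℕ}

theorem sortedVec_eq_comp_of_monotone {z : Fin n → α} {σ : Equiv.Perm (Fin n)}
    (h : Monotone (z ∘ σ)) : sortedVec z = z ∘ σ :=
  (Tuple.comp_sort_eq_comp_iff_monotone.mpr h).symm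

theorem monotone_sortedVec (z : Fin n → α) : Monotone (sortedVec z) :=
  Tuple.monotone_sort z

theorem sortedVec_comp_of_monotoneOn {f : α → β} {s : Set α} (hf : MonotoneOn f s)
    {z : Fin n → α} (hz : ∀ i, z i ∈ s) : sortedVec (f ∘ z) = f ∘ sortedVec z :=
  sortedVec_eq_comp_of_monotone fun _ _ hij ↦ hf (hz _) (hz _) (monotone_sortedVec z hij)

theorem Monotone.finSnoc {z : Fin n → α} (hz : Monotone z) {a : α} (ha : ∀ i, z i ≤ a) :
    Monotone (Fin.snoc z a : Fin (n + 1) → α) := by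
  intro i j hij
  induction j using Fin.lastCases with
  | last => induction i using Fin.lastCases <;> simp [ha]
  | cast j =>
    induction i using Fin.lastCases with
    | last => exact absurd hij (by simp)
    | cast i => simpa using hz (by simpa using hij)

theorem sortedVec_snoc {z : Fin n → α} {a : α} (ha : ∀ i, z i ≤ a) :
    sortedVec (Fin.snoc z a : Fin (n + 1) → α) = Fin.snoc (sortedVec z) a := by
  let σ : Equiv.Perm (Fin (n + 1)) :=
    finSuccEquivLast.symm.permCongr (Equiv.optionCongr (Tuple.sort z))
  have hσ : (Fin.snoc z a : Fin (n + 1) → α) ∘ σ = Fin.snoc (sortedVec z) a := by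
    funext k
    induction k using Fin.lastCases <;>
      simp [σ, Equiv.permCongr_apply, sortedVec]
  rw [sortedVec_eq_comp_of_monotone (hσ ▸ (monotone_sortedVec z).finSnoc fun i ↦ ha _), hσ]

theorem measurable_sortedVec [TopologicalSpace α] [MeasurableSpace α] [OpensMeasurableSpace α]
    [OrderClosedTopology α] [SecondCountableTopology α] :
    Measurable (sortedVec : (Fin n → α) → Fin n → α) := by
  intro s hs
  have hcover : sortedVec ⁻¹' s =
      ⋃ σ : Equiv.Perm (Fin n), {z | ∀ i j, i ≤ j → z (σ i) ≤ z (σ j)} ∩ (· ∘ σ) ⁻¹' s := by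
    ext z
    simp only [mem_preimage, mem_iUnion, mem_inter_iff, mem_ofPred_eq]
    refine ⟨fun hz ↦ ⟨Tuple.sort z, fun _ _ h ↦ monotone_sortedVec z h, hz⟩, ?_⟩
    rintro ⟨σ, hσ, hz⟩
    rwa [sortedVec_eq_comp_of_monotone fun i j h ↦ hσ i j h]
  rw [hcover]
  refine .iUnion fun σ ↦ .inter ?_ (measurable_pi_lambda _ (fun i ↦ measurable_pi_apply _) hs)
  simp only [ofPred_forall]
  exact .iInter fun i ↦ .iInter fun j ↦ .iInter fun _ ↦
    measurableSet_le (measurable_pi_apply _) (measurable_pi_apply _)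

noncomputable def orderedWeightedSum {n : ℕ} (μ z : Fin n → ℝ) : ℝ :=
  ∑ i, μ i * sortedVec z i

theorem measurable_orderedWeightedSum {n : ℕ} (μ : Fin n → ℝ) :
    Measurable (orderedWeightedSum μ) :=
  Finset.measurable_sum _ fun k _ ↦ ((measurable_pi_apply k).comp measurable_sortedVec).const_mul _

end SortedVec

theorem augOrder_eq_snoc {m : ℕ} (u : Fin m → ℝ) :
    augOrder (n := m + 1) u = Fin.snoc (sortedVec u) 1 := by
  funext k
  induction k using Fin.lastCases <;> simp [augOrder]

theorem fullVec_eq_snoc {Ω : Type*} {m : ℕ} (Zs : Fin m → Ω → ℝ) (M : ℝ) (ω : Ω) :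
    (fun j ↦ fullVec (n := m + 1) Zs M j ω) = Fin.snoc (fun i ↦ Zs i ω) M := by
  funext k
  induction k using Fin.lastCases <;> simp [fullVec]

namespace ProbabilityTheory

variable {ν : Measure ℝ} {t x : ℝ}

-- Only the values on `(0, 1)` matter: elsewhere `sInf` returns junk.
variable (ν) in
noncomputable def quantile (t : ℝ) : ℝ :=
  sInf {x | t ≤ cdf ν x}

theorem bddBelow_setOf_le_cdf (ht : 0 < t) : BddBelow {x | t ≤ cdf ν x} := by
  obtain ⟨x₀, hx₀⟩ := eventually_atBot.mp ((tendsto_cdf_atBot ν).eventually (gt_mem_nhds ht))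
  exact ⟨x₀, fun y hy ↦ le_of_not_gt fun hy₀ ↦ (hx₀ y hy₀.le).not_ge hy⟩

theorem nonempty_setOf_le_cdf (ht : t < 1) : {x | t ≤ cdf ν x}.Nonempty :=
  ((tendsto_cdf_atTop ν).eventually (lt_mem_nhds ht)).exists.imp fun _ h ↦ h.le

theorem le_cdf_quantile (ht : t ∈ Ioo 0 1) : t ≤ cdf ν (quantile ν t) := by
  have hgt : ∀ x, quantile ν t < x → t ≤ cdf ν x := fun x hx ↦ by
    obtain ⟨s, hs, hsx⟩ := exists_lt_of_csInf_lt (nonempty_setOf_le_cdf ht.2) hx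
    exact hs.trans ((cdf ν).mono hsx.le)
  exact ge_of_tendsto
    (((cdf ν).right_continuous _).mono_left (nhdsWithin_mono _ Ioi_subset_Ici_self))
    (eventually_mem_nhdsWithin.mono hgt)

theorem quantile_le_iff (ht : t ∈ Ioo 0 1) : quantile ν t ≤ x ↔ t ≤ cdf ν x :=
  ⟨fun h ↦ (le_cdf_quantile ht).trans ((cdf ν).mono h),
    fun h ↦ csInf_le (bddBelow_setOf_le_cdf ht.1) h⟩

theorem monotoneOn_quantile : MonotoneOn (quantile ν) (Ioo 0 1) := fun _ hs _ ht hst ↦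
  (quantile_le_iff hs).mpr (hst.trans (le_cdf_quantile ht))

theorem aemeasurable_quantile : AEMeasurable (quantile ν) (volume.restrict (Ioo 0 1)) :=
  aemeasurable_restrict_of_monotoneOn measurableSet_Ioo monotoneOn_quantile

variable [IsProbabilityMeasure ν]

theorem cdf_eq_one_of_ae_le {M : ℝ} (h : ∀ᵐ x ∂ν, x ≤ M) : cdf ν M = 1 := by
  rw [← ENNReal.ofReal_eq_one, ofReal_cdf, (prob_compl_eq_zero_iff measurableSet_Iic).mp h]

theorem map_quantile : (volume.restrict (Ioo 0 1)).map (quantile ν) = ν := by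
  have : IsProbabilityMeasure (volume.restrict (Ioo (0 : ℝ) 1)) := ⟨by simp⟩
  have := Measure.isProbabilityMeasure_map (aemeasurable_quantile (ν := ν))
  refine Measure.ext_of_Iic _ _ fun y ↦ ?_
  have hpre : quantile ν ⁻¹' Iic y ∩ Ioo 0 1 = Ioo 0 1 ∩ Iic (cdf ν y) := by
    ext t
    simp only [mem_inter_iff, mem_preimage, mem_Iic]
    exact ⟨fun h ↦ ⟨h.2, (quantile_le_iff h.2).mp h.1⟩,
      fun h ↦ ⟨(quantile_le_iff h.1).mpr h.2, h.1⟩⟩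
  rw [Measure.map_apply_of_aemeasurable aemeasurable_quantile measurableSet_Iic,
    Measure.restrict_apply' measurableSet_Ioo, hpre,
    measure_congr ((Ioo_ae_eq_Ioc (μ := volume) (a := (0 : ℝ)) (b := 1)).inter
      (ae_eq_refl (Iic (cdf ν y)))), Ioc_inter_Iic, Real.volume_Ioc,
    min_eq_right (cdf_le_one ν y), sub_zero, ofReal_cdf]

theorem intervalIntegrable_quantile (h : Integrable id ν) :
    IntervalIntegrable (quantile ν) volume 0 1 := by
  rw [intervalIntegrable_iff_integrableOn_Ioo_of_le zero_le_one]
  rw [← map_quantile (ν := ν)] at h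
  simpa [IntegrableOn] using
    (integrable_map_measure aestronglyMeasurable_id aemeasurable_quantile).mp h

theorem integral_quantile : ∫ t in 0..1, quantile ν t = ∫ x, x ∂ν := by
  rw [intervalIntegral.integral_of_le zero_le_one, integral_Ioc_eq_integral_Ioo]
  conv_rhs => rw [← map_quantile (ν := ν)]
  exact (integral_map aemeasurable_quantile aestronglyMeasurable_id).symm

end ProbabilityTheory

section Pieces

open intervalIntegral

theorem intervalIntegral_le_sum_mul_of_le_on_Ioo {a : ℕ → ℝ} (ha : Monotone a) {n : ℕ}
    {f : ℝ → ℝ} (hf : IntervalIntegrable f volume (a 0) (a n)) (w : Fin n → ℝ)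
    (hw : ∀ k : Fin n, ∀ t ∈ Ioo (a k) (a (k + 1)), f t ≤ w k) :
    ∫ t in a 0..a n, f t ≤ ∑ k : Fin n, (a (k + 1) - a k) * w k := by
  have hpiece : ∀ k < n, IntervalIntegrable f volume (a k) (a (k + 1)) := fun k hk ↦
    hf.mono_set (uIcc_subset_uIcc (mem_uIcc_of_le (ha k.zero_le) (ha hk.le))
      (mem_uIcc_of_le (ha (Nat.zero_le _)) (ha hk)))
  rw [← sum_integral_adjacent_intervals hpiece, ← Fin.sum_univ_eq_sum_range
    (fun k ↦ ∫ t in a k..a (k + 1), f t)]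
  refine Finset.sum_le_sum fun k _ ↦ ?_
  calc ∫ t in a k..a (k + 1), f t ≤ ∫ _ in a k..a (k + 1), w k :=
        integral_mono_on_of_le_Ioo (ha (Nat.le_succ k)) (hpiece k k.isLt) intervalIntegrable_const
          (hw k)
    _ = (a (k + 1) - a k) * w k := by simp

theorem intervalIntegral_le_sum_mul_of_le_on_pieces {n : ℕ} {μ : Fin n → ℝ} (hμ : ∀ i, 0 ≤ μ i)
    {f : ℝ → ℝ} (hf : IntervalIntegrable f volume 0 (∑ i, μ i)) (w : Fin n → ℝ)
    (hw : ∀ k, ∀ t ∈ Ioo (∑ i ∈ Finset.Iio k, μ i) (∑ i ∈ Finset.Iic k, μ i), f t ≤ w k) :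
    ∫ t in 0..∑ i, μ i, f t ≤ ∑ k, μ k * w k := by
  set a : ℕ → ℝ := fun j ↦ ∑ i ∈ Finset.univ.filter (fun i : Fin n ↦ (i : ℕ) < j), μ i
  have ha : Monotone a := fun j j' h ↦ Finset.sum_le_sum_of_subset_of_nonneg
    (fun i ↦ by simp only [Finset.mem_filter, Finset.mem_univ, true_and]; omega) fun i _ _ ↦ hμ i
  have ha_lt (k : Fin n) : a k = ∑ i ∈ Finset.Iio k, μ i := by
    simp only [a, Fin.lt_def, ← Finset.filter_gt_eq_Iio]
  have ha_le (k : Fin n) : a (k + 1) = ∑ i ∈ Finset.Iic k, μ i := by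
    simp only [a, Nat.lt_succ_iff, Fin.le_def, ← Finset.filter_ge_eq_Iic]
  have ha_zero : a 0 = 0 := by simp [a]
  have ha_top : a n = ∑ i, μ i := by simp [a]
  have key := intervalIntegral_le_sum_mul_of_le_on_Ioo ha (f := f) (ha_zero ▸ ha_top ▸ hf) w
    fun k ↦ ha_lt k ▸ ha_le k ▸ hw k
  simpa only [ha_zero, ha_top, ha_lt, ha_le, ← Finset.sum_Iio_add_eq_sum_Iic, add_sub_cancel_left]
    using key

end Pieces

section Uniform

variable {Ω : Type*} [MeasurableSpace Ω] {P : Measure Ω} {U : Ω → ℝ} {ν : Measure ℝ}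

theorem ae_mem_Ioo_of_map_eq_uniform (hU : AEMeasurable U P)
    (hlaw : P.map U = volume.restrict (Icc 0 1)) : ∀ᵐ ω ∂P, U ω ∈ Ioo 0 1 := by
  rw [← Measure.restrict_congr_set Ioo_ae_eq_Icc] at hlaw
  exact ae_of_ae_map hU (hlaw ▸ ae_restrict_mem measurableSet_Ioo)

theorem aemeasurable_quantile_comp (hU : AEMeasurable U P)
    (hlaw : P.map U = volume.restrict (Icc 0 1)) : AEMeasurable (quantile ν ∘ U) P := by
  rw [← Measure.restrict_congr_set Ioo_ae_eq_Icc] at hlaw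
  exact (hlaw ▸ aemeasurable_quantile).comp_aemeasurable hU

theorem map_quantile_comp [IsProbabilityMeasure ν] (hU : AEMeasurable U P)
    (hlaw : P.map U = volume.restrict (Icc 0 1)) : P.map (quantile ν ∘ U) = ν := by
  rw [← Measure.restrict_congr_set Ioo_ae_eq_Icc] at hlaw
  rw [← AEMeasurable.map_map_of_aemeasurable (hlaw ▸ aemeasurable_quantile) hU, hlaw, map_quantile]

theorem map_quantile_comp_eq_pi [IsProbabilityMeasure ν] {ι : Type*} [Fintype ι]
    {U : ι → Ω → ℝ} (hU : ∀ i, AEMeasurable (U i) P) (hind : iIndepFun U P)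
    (hlaw : ∀ i, P.map (U i) = volume.restrict (Icc 0 1)) :
    P.map (fun ω i ↦ quantile ν (U i ω)) = Measure.pi fun _ ↦ ν := by
  have hqU i := aemeasurable_quantile_comp (ν := ν) (hU i) (hlaw i)
  have hq i : AEMeasurable (quantile ν) (P.map (U i)) := by
    rw [hlaw, ← Measure.restrict_congr_set Ioo_ae_eq_Icc]
    exact aemeasurable_quantile
  refine ((hind.comp₀ (fun _ ↦ quantile ν) hU hq).map_fun_eq_pi_map hqU).trans ?_
  simp only [map_quantile_comp (hU _) (hlaw _)]

theorem measure_preimage_quantile_comp_eq [IsProbabilityMeasure ν] {ι : Type*} [Fintype ι]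
    {U X : ι → Ω → ℝ} (hU : ∀ i, AEMeasurable (U i) P) (hUind : iIndepFun U P)
    (hUlaw : ∀ i, P.map (U i) = volume.restrict (Icc 0 1)) (hX : ∀ i, AEMeasurable (X i) P)
    (hXind : iIndepFun X P) (hXlaw : ∀ i, P.map (X i) = ν) {A : Set (ι → ℝ)}
    (hA : MeasurableSet A) :
    P ((fun ω i ↦ quantile ν (U i ω)) ⁻¹' A) = P ((fun ω i ↦ X i ω) ⁻¹' A) := by
  have hlaw : P.map (fun ω i ↦ quantile ν (U i ω)) = P.map (fun ω i ↦ X i ω) := by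
    rw [map_quantile_comp_eq_pi hU hUind hUlaw, hXind.map_fun_eq_pi_map hX]
    simp only [hXlaw]
  rw [← Measure.map_apply_of_aemeasurable (f := fun ω i ↦ quantile ν (U i ω))
      (aemeasurable_pi_lambda _ fun i ↦ aemeasurable_quantile_comp (hU i) (hUlaw i)) hA, hlaw,
    Measure.map_apply_of_aemeasurable (aemeasurable_pi_lambda _ hX) hA]

end Uniform

theorem integral_le_orderedWeightedSum_quantile {ν : Measure ℝ} [IsProbabilityMeasure ν]
    (hν : Integrable id ν) {M : ℝ} (hM : ∀ᵐ x ∂ν, x ≤ M) {m : ℕ} {μ : Fin (m + 1) → ℝ}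
    (hμ : ∀ i, 0 ≤ μ i) (hμ_sum : ∑ i, μ i = 1) {u : Fin m → ℝ} (hu : ∀ i, u i ∈ Ioo 0 1)
    (hS : ∀ k, ∑ i ∈ Finset.Iic k, μ i ≤ (Fin.snoc (sortedVec u) 1 : Fin (m + 1) → ℝ) k) :
    ∫ x, x ∂ν ≤ orderedWeightedSum μ (Fin.snoc (quantile ν ∘ u) M) := by
  have hq_le_M : ∀ t ∈ Ioo (0 : ℝ) 1, quantile ν t ≤ M := fun t ht ↦
    (quantile_le_iff ht).mpr (cdf_eq_one_of_ae_le hM ▸ ht.2.le)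
  rw [orderedWeightedSum, sortedVec_snoc (z := quantile ν ∘ u) fun i ↦ hq_le_M _ (hu i),
    sortedVec_comp_of_monotoneOn monotoneOn_quantile hu, ← integral_quantile, ← hμ_sum]
  refine intervalIntegral_le_sum_mul_of_le_on_pieces hμ
    (hμ_sum ▸ intervalIntegrable_quantile hν) _ fun k t ht ↦ ?_
  have ht01 : t ∈ Ioo 0 1 := ⟨(Finset.sum_nonneg fun i _ ↦ hμ i).trans_lt ht.1,
    hμ_sum ▸ ht.2.trans_le (Finset.sum_le_sum_of_subset_of_nonneg (Finset.subset_univ _)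
      fun i _ _ ↦ hμ i)⟩
  have htk := ht.2.le.trans (hS k)
  induction k using Fin.lastCases with
  | last => simpa using hq_le_M t ht01
  | cast j =>
    simp only [Fin.snoc_castSucc, Function.comp_apply] at htk ⊢
    exact monotoneOn_quantile ht01 (hu _) htk

theorem prob_distortion_ge_mean_general
    {Ω : Type*} [MeasurableSpace Ω] (P : Measure Ω) [IsProbabilityMeasure P]
    (n : ℕ)
    (μ : Fin n → ℝ) (hμ_nonneg : ∀ i, 0 ≤ μ i)
    (hμ_sum : ∑ i, μ i = 1)
    (Z : Ω → ℝ) (hZint : Integrable Z P)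
    (M : ℝ) (hM_ub : ∀ᵐ ω ∂P, Z ω ≤ M)
    (Zs : Fin (n - 1) → Ω → ℝ) (hZs_meas : ∀ i, Measurable (Zs i))
    (hZs_indep : iIndepFun Zs P)
    (hZs_law : ∀ i, Measure.map (Zs i) P = Measure.map Z P)
    (Us : Fin (n - 1) → Ω → ℝ) (hUs_meas : ∀ i, Measurable (Us i))
    (hUs_indep : iIndepFun Us P)
    (hUs_law : ∀ i, Measure.map (Us i) P = volume.restrict (Set.Icc (0 : ℝ) 1)) :
    P {ω | ∀ k : Fin n,
        ∑ i ∈ Finset.univ.filter (fun i : Fin n => i ≤ k), μ i ≤ augOrder (fun i => Us i ω) k} ≤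
      P {ω | (∫ x, Z x ∂P) ≤ ∑ i, μ i * sortedVec (fun j => fullVec Zs M j ω) i} := by
  obtain ⟨m, rfl⟩ : ∃ m, n = m + 1 :=
    Nat.exists_eq_succ_of_ne_zero (by rintro rfl; simp at hμ_sum)
  set ν := P.map Z
  have : IsProbabilityMeasure ν := Measure.isProbabilityMeasure_map hZint.aemeasurable
  have hEZ : ∫ x, Z x ∂P = ∫ x, x ∂ν :=
    (integral_map hZint.aemeasurable aestronglyMeasurable_id).symm
  have hUs_mem : ∀ᵐ ω ∂P, ∀ i, Us i ω ∈ Ioo 0 1 := ae_all_iff.mpr fun i ↦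
    ae_mem_Ioo_of_map_eq_uniform (hUs_meas i).aemeasurable (hUs_law i)
  set A := (orderedWeightedSum μ ∘ (Fin.snoc · M)) ⁻¹' Ici (∫ x, Z x ∂P)
  have hA : MeasurableSet A := (measurable_orderedWeightedSum μ).comp
    (continuous_id.finSnoc continuous_const).measurable measurableSet_Ici
  calc _ ≤ P ((fun ω i ↦ quantile ν (Us i ω)) ⁻¹' A) := by
        refine measure_mono_ae (hUs_mem.mono fun ω hω hS ↦ ?_)
        show ∫ x, Z x ∂P ≤ orderedWeightedSum μ (Fin.snoc (quantile ν ∘ fun i ↦ Us i ω) M)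
        rw [hEZ]
        refine integral_le_orderedWeightedSum_quantile
          ((integrable_map_measure aestronglyMeasurable_id hZint.aemeasurable).mpr hZint)
          ((ae_map_iff hZint.aemeasurable measurableSet_Iic).mpr hM_ub) hμ_nonneg hμ_sum hω
          fun k ↦ ?_
        have hSk := hS k
        rwa [Finset.filter_ge_eq_Iic, augOrder_eq_snoc] at hSk
    _ = P ((fun ω i ↦ Zs i ω) ⁻¹' A) :=
      measure_preimage_quantile_comp_eq (fun i ↦ (hUs_meas i).aemeasurable) hUs_indep hUs_law
        (fun i ↦ (hZs_meas i).aemeasurable) hZs_indep hZs_law hA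
    _ = _ := by simp only [fullVec_eq_snoc]; rfl

/-- let `0 ≤ μ_1 ≤ ⋯ ≤ μ_n` with `∑ μ_i = 1`, let `Z_(1) ≤ ⋯ ≤ Z_(n)` be the
order statistics of iid copies `Z_1, …, Z_{n-1}` of `Z` together with `Z_n := esssup Z`, and
let `U_(1) ≤ ⋯ ≤ U_(n-1)` be the order statistics of `n-1` iid `U[0,1]` variables with
`U_(n) := 1`. Then `P[∑ μ_i Z_(i) ≥ E[Z]] ≥ P[∑_{i=1}^k μ_i ≤ U_(k), ∀ k ∈ [n]]`. -/
theorem prob_distortion_ge_mean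
    {Ω : Type*} [MeasurableSpace Ω] (P : Measure Ω) [IsProbabilityMeasure P]
    (n : ℕ) (hn : 1 ≤ n)
    (μ : Fin n → ℝ) (hμ_mono : Monotone μ) (hμ_nonneg : ∀ i, 0 ≤ μ i)
    (hμ_sum : ∑ i, μ i = 1)
    (Z : Ω → ℝ) (hZmeas : Measurable Z) (hZint : Integrable Z P)
    (M : ℝ) (hM_ub : ∀ᵐ ω ∂P, Z ω ≤ M) (hM_least : ∀ c : ℝ, (∀ᵐ ω ∂P, Z ω ≤ c) → M ≤ c)
    (Zs : Fin (n - 1) → Ω → ℝ) (hZs_meas : ∀ i, Measurable (Zs i))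
    (hZs_indep : iIndepFun Zs P)
    (hZs_law : ∀ i, Measure.map (Zs i) P = Measure.map Z P)
    (Us : Fin (n - 1) → Ω → ℝ) (hUs_meas : ∀ i, Measurable (Us i))
    (hUs_indep : iIndepFun Us P)
    (hUs_law : ∀ i, Measure.map (Us i) P = volume.restrict (Set.Icc (0 : ℝ) 1)) :
    P {ω | ∀ k : Fin n,
        ∑ i ∈ Finset.univ.filter (fun i : Fin n => i ≤ k), μ i ≤ augOrder (fun i => Us i ω) k} ≤
      P {ω | (∫ x, Z x ∂P) ≤ ∑ i, μ i * sortedVec (fun j => fullVec Zs M j ω) i} :=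
  prob_distortion_ge_mean_general P n μ hμ_nonneg hμ_sum Z hZint M hM_ub Zs hZs_meas hZs_indep
    hZs_law Us hUs_meas hUs_indep hUs_law
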